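/- The 2-adic valuation of the involution numbers is ν₂(I(4k)) = k, ν₂(I(4k+1)) = k, ν₂(I(4k+2)) = k+1, and ν₂(I(4k+3)) = k+2 for all k ≥ 0. Equivalently, ν₂(I(n)) = ⌊n/2⌋ − 2⌊n/4⌋ + ⌊(n+1)/4⌋. -/
import Mathlib


/-- Involution numbers via the recurrence. -/
def invRec : ℕ → ℕ
  | 0 => 1
  | 1 => 1
  | n + 2 => invRec (n + 1) + (n + 1) * invRec n

def R0 (j : ℕ) : ℕ := [1, 5, 31, 15, 17, 13, 15, 7, 1, 21, 31, 31, 17, 29, 15, 23].getD j 0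
def R1 (j : ℕ) : ℕ := [1, 13, 15, 23, 17, 21, 31, 15, 1, 29, 15, 7, 17, 5, 31, 31].getD j 0

lemma numA : ∀ j < 16, ((4*j+3)*R1 j + 2*((j+1)*(4*j+1))*R0 j) % 32 = R0 ((j+1)%16) % 32 := by
  decide

lemma numB : ∀ j < 16,
    ((8*j*j+18*j+9)*R1 j + 4*((j+1)*(4*j+1))*R0 j) % 32 = R1 ((j+1)%16) % 32 := by
  decide

lemma numC : ∀ j < 16, (R1 j + R0 j) % 4 = 2 ∧ ((4*j+3)*R1 j + (4*j+1)*R0 j) % 8 = 4 ∧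
    R0 j % 2 = 1 ∧ R0 j < 32 ∧ R1 j % 2 = 1 ∧ R1 j < 32 := by
  decide

lemma invRec_step (n : ℕ) : invRec (n+2) = invRec (n+1) + (n+1) * invRec n := by
  simp [invRec]

lemma pv (v u : ℕ) (hu : u % 2 = 1) : padicValNat 2 (2^v * u) = v := by
  have hu0 : u ≠ 0 := by omega
  rw [padicValNat.mul (by positivity) hu0, padicValNat.prime_pow,
    padicValNat.eq_zero_of_not_dvd (by omega), add_zero]

lemma extract (x v s r : ℕ) (hr : r < 2^s) (hodd : r % 2 = 1)
    (h : x ≡ 2^v * r [MOD 2^(v+s)]) : padicValNat 2 x = v := by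
  have h2v : 0 < (2:ℕ)^v := pow_pos (by norm_num) v
  have e : (2:ℕ)^(v+s) = 2^v * 2^s := pow_add 2 v s
  have hlt : 2^v * r < 2^(v+s) := by
    rw [e]; gcongr
  have hx : x % 2^(v+s) = 2^v * r := by
    rw [Nat.ModEq] at h; rw [Nat.mod_eq_of_lt hlt] at h; exact h
  have hdm := Nat.div_add_mod x (2^(v+s))
  rw [hx] at hdm
  have hxx : x = 2^v * (2^s * (x / 2^(v+s)) + r) := by
    rw [mul_add, ← mul_assoc, ← e]; omega
  have hs : 1 ≤ s := by
    by_contra hc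
    interval_cases s
    · simp at hr; omega
  have hu : (2^s * (x / 2^(v+s)) + r) % 2 = 1 := by
    have h2 : (2:ℕ) ∣ 2^s * (x / 2^(v+s)) :=
      Dvd.dvd.mul_right (dvd_pow_self 2 (by omega)) _
    omega
  rw [hxx]; exact pv v _ hu

lemma inv_modeq : ∀ k : ℕ, invRec (4*k) ≡ 2^k * R0 (k%16) [MOD 2^(k+5)] ∧
    invRec (4*k+1) ≡ 2^k * R1 (k%16) [MOD 2^(k+5)] := by
  intro k
  induction k with
  | zero => constructor <;> decide
  | succ k ih =>
    obtain ⟨h0, h1⟩ := ih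
    have a2 : invRec (4*k+2) = invRec (4*k+1) + (4*k+1) * invRec (4*k) := invRec_step (4*k)
    have a3 : invRec (4*k+3) = invRec (4*k+2) + (4*k+2) * invRec (4*k+1) := invRec_step (4*k+1)
    have a4 : invRec (4*k+4) = invRec (4*k+3) + (4*k+3) * invRec (4*k+2) := invRec_step (4*k+2)
    have a5 : invRec (4*k+5) = invRec (4*k+4) + (4*k+4) * invRec (4*k+3) := invRec_step (4*k+3)
    have e0 : invRec (4*k+4) = (8*k+6) * invRec (4*k+1) + (4*((k+1)*(4*k+1))) * invRec (4*k) := by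
      rw [a4, a3, a2]; ring
    have e1 : invRec (4*k+5) = (2*(8*k*k+18*k+9)) * invRec (4*k+1)
        + (8*((k+1)*(4*k+1))) * invRec (4*k) := by
      rw [a5, a4, a3, a2]; ring
    obtain ⟨q, j, hj, rfl⟩ : ∃ q j, j < 16 ∧ k = 16*q + j := ⟨k/16, k%16, by omega, by omega⟩
    have hm : (16*q+j) % 16 = j := by omega
    have hm1 : (16*q+j+1) % 16 = (j+1) % 16 := by omega
    rw [hm] at h0 h1
    constructor
    · show invRec (4*(16*q+j+1)) ≡ 2^(16*q+j+1) * R0 ((16*q+j+1)%16) [MOD 2^(16*q+j+6)]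
      rw [hm1, show 4*(16*q+j+1) = 4*(16*q+j)+4 by ring, e0]
      have c1 : (8*(16*q+j)+6) * invRec (4*(16*q+j)+1)
          ≡ (8*(16*q+j)+6) * (2^(16*q+j) * R1 j) [MOD 2^(16*q+j+6)] :=
        (h1.mul_left' _).of_dvd ⟨4*(16*q+j)+3, by ring⟩
      have c2 : (4*(((16*q+j)+1)*(4*(16*q+j)+1))) * invRec (4*(16*q+j))
          ≡ (4*(((16*q+j)+1)*(4*(16*q+j)+1))) * (2^(16*q+j) * R0 j) [MOD 2^(16*q+j+6)] :=
        (h0.mul_left' _).of_dvd ⟨2*(((16*q+j)+1)*(4*(16*q+j)+1)), by ring⟩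
      refine (c1.add c2).trans ?_
      have key : (4*(16*q+j)+3)*R1 j + 2*(((16*q+j)+1)*(4*(16*q+j)+1))*R0 j
          ≡ R0 ((j+1)%16) [MOD 32] := by
        have expand : (4*(16*q+j)+3)*R1 j + 2*(((16*q+j)+1)*(4*(16*q+j)+1))*R0 j
            = 32*(2*q*R1 j + (64*q*q + 8*q*j + 5*q)*R0 j)
              + ((4*j+3)*R1 j + 2*((j+1)*(4*j+1))*R0 j) := by ring
        show _ % 32 = _ % 32
        rw [expand, Nat.mul_add_mod]
        exact numA j hj
      have key' := key.mul_left' (2^(16*q+j+1))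
      rw [show (2:ℕ)^(16*q+j+1)*32 = 2^(16*q+j+6) by ring] at key'
      have sh : (8*(16*q+j)+6) * (2^(16*q+j) * R1 j)
          + (4*(((16*q+j)+1)*(4*(16*q+j)+1))) * (2^(16*q+j) * R0 j)
          = 2^(16*q+j+1) * ((4*(16*q+j)+3)*R1 j
            + 2*(((16*q+j)+1)*(4*(16*q+j)+1))*R0 j) := by ring
      rw [sh]
      exact key'
    · show invRec (4*(16*q+j+1)+1) ≡ 2^(16*q+j+1) * R1 ((16*q+j+1)%16) [MOD 2^(16*q+j+6)]
      rw [hm1, show 4*(16*q+j+1)+1 = 4*(16*q+j)+5 by ring, e1]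
      have c1 : (2*(8*(16*q+j)*(16*q+j)+18*(16*q+j)+9)) * invRec (4*(16*q+j)+1)
          ≡ (2*(8*(16*q+j)*(16*q+j)+18*(16*q+j)+9)) * (2^(16*q+j) * R1 j)
            [MOD 2^(16*q+j+6)] :=
        (h1.mul_left' _).of_dvd ⟨8*(16*q+j)*(16*q+j)+18*(16*q+j)+9, by ring⟩
      have c2 : (8*(((16*q+j)+1)*(4*(16*q+j)+1))) * invRec (4*(16*q+j))
          ≡ (8*(((16*q+j)+1)*(4*(16*q+j)+1))) * (2^(16*q+j) * R0 j) [MOD 2^(16*q+j+6)] :=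
        (h0.mul_left' _).of_dvd ⟨4*(((16*q+j)+1)*(4*(16*q+j)+1)), by ring⟩
      refine (c1.add c2).trans ?_
      have key : (8*(16*q+j)*(16*q+j)+18*(16*q+j)+9)*R1 j
          + 4*(((16*q+j)+1)*(4*(16*q+j)+1))*R0 j ≡ R1 ((j+1)%16) [MOD 32] := by
        have expand : (8*(16*q+j)*(16*q+j)+18*(16*q+j)+9)*R1 j
            + 4*(((16*q+j)+1)*(4*(16*q+j)+1))*R0 j
            = 32*((64*q*q+8*q*j+9*q)*R1 j + (128*q*q+16*q*j+10*q)*R0 j)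
              + ((8*j*j+18*j+9)*R1 j + 4*((j+1)*(4*j+1))*R0 j) := by ring
        show _ % 32 = _ % 32
        rw [expand, Nat.mul_add_mod]
        exact numB j hj
      have key' := key.mul_left' (2^(16*q+j+1))
      rw [show (2:ℕ)^(16*q+j+1)*32 = 2^(16*q+j+6) by ring] at key'
      have sh : (2*(8*(16*q+j)*(16*q+j)+18*(16*q+j)+9)) * (2^(16*q+j) * R1 j)
          + (8*(((16*q+j)+1)*(4*(16*q+j)+1))) * (2^(16*q+j) * R0 j)
          = 2^(16*q+j+1) * ((8*(16*q+j)*(16*q+j)+18*(16*q+j)+9)*R1 j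
            + 4*(((16*q+j)+1)*(4*(16*q+j)+1))*R0 j) := by ring
      rw [sh]
      exact key'

lemma part1 (k : ℕ) :
    padicValNat 2 (invRec (4 * k)) = k ∧
    padicValNat 2 (invRec (4 * k + 1)) = k ∧
    padicValNat 2 (invRec (4 * k + 2)) = k + 1 ∧
    padicValNat 2 (invRec (4 * k + 3)) = k + 2 := by
  obtain ⟨h0, h1⟩ := inv_modeq k
  obtain ⟨hc1, hc2, hc3, hc4, hc5, hc6⟩ := numC (k % 16) (by omega)
  refine ⟨?_, ?_, ?_, ?_⟩
  · exact extract _ k 5 (R0 (k%16)) hc4 hc3 h0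
  · exact extract _ k 5 (R1 (k%16)) hc6 hc5 h1
  · have a2 : invRec (4*k+2) = invRec (4*k+1) + (4*k+1) * invRec (4*k) := invRec_step (4*k)
    have c : invRec (4*k+2) ≡ 2^k * R1 (k%16) + (4*k+1) * (2^k * R0 (k%16))
        [MOD 2^(k+2)] := by
      rw [a2]; exact (h1.add (h0.mul_left _)).of_dvd ⟨8, by ring⟩
    have t : R1 (k%16) + (4*k+1) * R0 (k%16) ≡ 2 [MOD 4] := by
      have expand : R1 (k%16) + (4*k+1) * R0 (k%16)
          = 4*(k * R0 (k%16)) + (R1 (k%16) + R0 (k%16)) := by ring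
      show _ % 4 = _ % 4
      rw [expand, Nat.mul_add_mod]
      exact hc1
    have t' := t.mul_left' (2^k)
    rw [show (2:ℕ)^k * 4 = 2^(k+2) by ring] at t'
    have h2 : invRec (4*k+2) ≡ 2^(k+1) * 1 [MOD 2^(k+1+1)] := by
      refine (c.trans ?_)
      rw [show 2^k * R1 (k%16) + (4*k+1) * (2^k * R0 (k%16))
          = 2^k * (R1 (k%16) + (4*k+1) * R0 (k%16)) by ring,
        show (2:ℕ)^(k+1) * 1 = 2^k * 2 by ring]
      exact t'
    exact extract _ (k+1) 1 1 (by norm_num) (by norm_num) h2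
  · have a2 : invRec (4*k+2) = invRec (4*k+1) + (4*k+1) * invRec (4*k) := invRec_step (4*k)
    have a3 : invRec (4*k+3) = invRec (4*k+2) + (4*k+2) * invRec (4*k+1) := invRec_step (4*k+1)
    have e3 : invRec (4*k+3) = (4*k+3) * invRec (4*k+1) + (4*k+1) * invRec (4*k) := by
      rw [a3, a2]; ring
    have c : invRec (4*k+3) ≡ (4*k+3) * (2^k * R1 (k%16)) + (4*k+1) * (2^k * R0 (k%16))
        [MOD 2^(k+3)] := by
      rw [e3]; exact ((h1.mul_left _).add (h0.mul_left _)).of_dvd ⟨4, by ring⟩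
    obtain ⟨q, j, hj, hqj⟩ : ∃ q j, j < 16 ∧ k = 16*q + j := ⟨k/16, k%16, by omega, by omega⟩
    have hm : k % 16 = j := by omega
    have t : (4*k+3) * R1 (k%16) + (4*k+1) * R0 (k%16) ≡ 4 [MOD 8] := by
      have expand : (4*k+3) * R1 (k%16) + (4*k+1) * R0 (k%16)
          = 8*(8*(q * R1 (k%16)) + 8*(q * R0 (k%16)))
            + ((4*j+3) * R1 (k%16) + (4*j+1) * R0 (k%16)) := by rw [hqj]; ring
      show _ % 8 = _ % 8
      rw [expand, Nat.mul_add_mod, hm]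
      exact (numC j hj).2.1
    have t' := t.mul_left' (2^k)
    rw [show (2:ℕ)^k * 8 = 2^(k+3) by ring] at t'
    have h3 : invRec (4*k+3) ≡ 2^(k+2) * 1 [MOD 2^(k+2+1)] := by
      refine (c.trans ?_)
      rw [show (4*k+3) * (2^k * R1 (k%16)) + (4*k+1) * (2^k * R0 (k%16))
          = 2^k * ((4*k+3) * R1 (k%16) + (4*k+1) * R0 (k%16)) by ring,
        show (2:ℕ)^(k+2) * 1 = 2^k * 4 by ring]
      exact t'
    exact extract _ (k+2) 1 1 (by norm_num) (by norm_num) h3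

theorem involution_two_adic_valuation :
    (∀ k : ℕ,
      padicValNat 2 (invRec (4 * k)) = k ∧
      padicValNat 2 (invRec (4 * k + 1)) = k ∧
      padicValNat 2 (invRec (4 * k + 2)) = k + 1 ∧
      padicValNat 2 (invRec (4 * k + 3)) = k + 2) ∧
    (∀ n : ℕ, padicValNat 2 (invRec n) = n / 2 - 2 * (n / 4) + (n + 1) / 4) := by
  refine ⟨part1, ?_⟩
  intro n
  obtain ⟨k, r, hr4, rfl⟩ : ∃ k r, r < 4 ∧ n = 4*k+r := ⟨n/4, n%4, by omega, by omega⟩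
  obtain ⟨p0, p1, p2, p3⟩ := part1 k
  interval_cases r
  · simp only [add_zero]; rw [p0]; omega
  · rw [p1]; omega
  · rw [p2]; omega
  · rw [p3]; omega
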